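/- Let D' = {(x,t_2,t_3) ∈ ℝ³ : 3t_3 + 2x³ + 6xt_2 ≠ 0} and define on D' the rational functions q_1 = 3(t_2 + x²)/(3t_3 + 2x³ + 6xt_2) and q_2 = 3x/(3t_3 + 2x³ + 6xt_2). Then (q_1,q_2) is a simultaneous solution on D' of the second and third flows of the two-component cKdV hierarchy with α = 0: (i) ∂q_1/∂t_2 = ∂_x q_2 and ∂q_2/∂t_2 = 2q_2 ∂_x q_1 + 4q_1 ∂_x q_2 − 6q_1² ∂_x q_1 + (1/4)∂_x³ q_1; (ii) ∂q_1/∂t_3 = 3q_2 ∂_x q_1 + 3q_1 ∂_x q_2 − 6q_1² ∂_x q_1 + (1/4)∂_x³ q_1 and ∂q_2/∂t_3 = 6q_1 q_2 ∂_x q_1 − 18q_1³ ∂_x q_1 + 6q_1² ∂_x q_2 + (3/4)q_1 ∂_x³ q_1 + 3q_2 ∂_x q_2 + (1/4)∂_x³ q_2. -/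

import Mathlib

/-- `q₁ = 3(t₂ + x²)/(3t₃ + 2x³ + 6xt₂)`. -/
noncomputable def q1sol (x t2 t3 : ℝ) : ℝ :=
  3 * (t2 + x ^ 2) / (3 * t3 + 2 * x ^ 3 + 6 * x * t2)

/-- `q₂ = 3x/(3t₃ + 2x³ + 6xt₂)`. -/
noncomputable def q2sol (x t2 t3 : ℝ) : ℝ :=
  3 * x / (3 * t3 + 2 * x ^ 3 + 6 * x * t2)

/-! `q₁` and `q₂` are quotients of polynomials by the common denominator
`D = 3t₃ + 2x³ + 6xt₂`, separately in each of `x`, `t₂`, `t₃`. The `n`-th derivative of `p / d ^ k`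
is `Nₙ / d ^ (k + n)` for a numerator `Nₙ` computed by an explicit polynomial recursion, so every
derivative in both flows is an explicit rational function of `x, t₂, t₃` with a power of `D` as
denominator. Eliminating `t₃` in favour of `D` turns each flow equation into an identity of
rational functions in `x, t₂, D`. -/

open Polynomial

namespace Polynomial

/-- The numerator of the `n`-th derivative of `p / d ^ k`, whose denominator is `d ^ (k + n)`. -/
noncomputable def derivNumDivPow {R : Type*} [CommRing R] (p d : R[X]) (k : ℕ) : ℕ → R[X]
  | 0 => p
  | n + 1 => derivative (derivNumDivPow p d k n) * d
      - ((k + n : ℕ) : R[X]) * derivNumDivPow p d k n * derivative d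

variable {𝕜 : Type*} [NontriviallyNormedField 𝕜]

theorem hasDerivAt_eval_div_pow (p d : 𝕜[X]) (k : ℕ) {x : 𝕜} (hx : d.eval x ≠ 0) :
    HasDerivAt (fun y => p.eval y / d.eval y ^ k)
      ((derivative p * d - k * p * derivative d).eval x / d.eval x ^ (k + 1)) x := by
  refine ((p.hasDerivAt x).div ((d.hasDerivAt x).pow k) (pow_ne_zero k hx)).congr_deriv ?_
  simp only [eval_sub, eval_mul, eval_natCast, Pi.pow_apply]
  rcases k with _ | k
  · field_simp
    simp
  · field_simp
    push_cast
    ring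

theorem iteratedDeriv_eval_div_pow (p d : 𝕜[X]) (k n : ℕ) {x : 𝕜} (hx : d.eval x ≠ 0) :
    iteratedDeriv n (fun y => p.eval y / d.eval y ^ k) x
      = (derivNumDivPow p d k n).eval x / d.eval x ^ (k + n) := by
  induction n generalizing x with
  | zero => simp [derivNumDivPow]
  | succ n ih =>
    have hnear : iteratedDeriv n (fun y => p.eval y / d.eval y ^ k)
        =ᶠ[nhds x] fun y => (derivNumDivPow p d k n).eval y / d.eval y ^ (k + n) :=
      (d.continuous.continuousAt.eventually_ne hx).mono fun y hy => ih hy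
    rw [iteratedDeriv_succ, hnear.deriv_eq, (hasDerivAt_eval_div_pow _ d (k + n) hx).deriv,
      derivNumDivPow, add_assoc]

theorem iteratedDeriv_eval_div (p d : 𝕜[X]) (n : ℕ) {x : 𝕜} (hx : d.eval x ≠ 0) :
    iteratedDeriv n (fun y => p.eval y / d.eval y) x
      = (derivNumDivPow p d 1 n).eval x / d.eval x ^ (1 + n) := by
  simpa using iteratedDeriv_eval_div_pow p d 1 n hx

end Polynomial

noncomputable def denomInX (t2 t3 : ℝ) : ℝ[X] := C 2 * X ^ 3 + C (6 * t2) * X + C (3 * t3)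

noncomputable def denomInT2 (x t3 : ℝ) : ℝ[X] := C (6 * x) * X + C (3 * t3 + 2 * x ^ 3)

noncomputable def denomInT3 (x t2 : ℝ) : ℝ[X] := C 3 * X + C (2 * x ^ 3 + 6 * x * t2)

section

variable (x t2 t3 : ℝ)

theorem eval_denomInX : (denomInX t2 t3).eval x = 3 * t3 + 2 * x ^ 3 + 6 * x * t2 := by
  simp only [denomInX, eval_add, eval_mul, eval_pow, eval_C, eval_X]
  ring

theorem eval_denomInT2 : (denomInT2 x t3).eval t2 = 3 * t3 + 2 * x ^ 3 + 6 * x * t2 := by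
  simp only [denomInT2, eval_add, eval_mul, eval_C, eval_X]
  ring

theorem eval_denomInT3 : (denomInT3 x t2).eval t3 = 3 * t3 + 2 * x ^ 3 + 6 * x * t2 := by
  simp only [denomInT3, eval_add, eval_mul, eval_C, eval_X]
  ring

theorem q1sol_x_eq_eval_div :
    (fun y => q1sol y t2 t3)
      = fun y => (C 3 * X ^ 2 + C (3 * t2)).eval y / (denomInX t2 t3).eval y := by
  funext y
  simp only [q1sol, eval_denomInX, eval_add, eval_mul, eval_pow, eval_C, eval_X]
  ring

theorem q2sol_x_eq_eval_div :
    (fun y => q2sol y t2 t3) = fun y => (C 3 * X : ℝ[X]).eval y / (denomInX t2 t3).eval y := by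
  funext y
  simp only [q2sol, eval_denomInX, eval_mul, eval_C, eval_X]

theorem q1sol_t2_eq_eval_div :
    (fun s => q1sol x s t3)
      = fun s => (C 3 * X + C (3 * x ^ 2)).eval s / (denomInT2 x t3).eval s := by
  funext s
  simp only [q1sol, eval_denomInT2, eval_add, eval_mul, eval_C, eval_X]
  ring

theorem q2sol_t2_eq_eval_div :
    (fun s => q2sol x s t3) = fun s => (C (3 * x)).eval s / (denomInT2 x t3).eval s := by
  funext s
  simp only [q2sol, eval_denomInT2, eval_C]

theorem q1sol_t3_eq_eval_div :
    (fun s => q1sol x t2 s)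
      = fun s => (C (3 * (t2 + x ^ 2))).eval s / (denomInT3 x t2).eval s := by
  funext s
  simp only [q1sol, eval_denomInT3, eval_C]

theorem q2sol_t3_eq_eval_div :
    (fun s => q2sol x t2 s) = fun s => (C (3 * x)).eval s / (denomInT3 x t2).eval s := by
  funext s
  simp only [q2sol, eval_denomInT3, eval_C]

end

/-- On the set where `3t₃ + 2x³ + 6xt₂ ≠ 0`, `(q₁,q₂)` is a simultaneous solution of the
second and third flows of the two-component cKdV hierarchy with `α = 0`. -/
theorem rational_solution_ckdv_alpha0 :
    ∀ x t2 t3 : ℝ, 3 * t3 + 2 * x ^ 3 + 6 * x * t2 ≠ 0 →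
      ((deriv (fun s => q1sol x s t3) t2 = deriv (fun y => q2sol y t2 t3) x)
        ∧ (deriv (fun s => q2sol x s t3) t2
            = 2 * q2sol x t2 t3 * deriv (fun y => q1sol y t2 t3) x
              + 4 * q1sol x t2 t3 * deriv (fun y => q2sol y t2 t3) x
              - 6 * q1sol x t2 t3 ^ 2 * deriv (fun y => q1sol y t2 t3) x
              + (1 / 4) * iteratedDeriv 3 (fun y => q1sol y t2 t3) x))
      ∧ ((deriv (fun s => q1sol x t2 s) t3
            = 3 * q2sol x t2 t3 * deriv (fun y => q1sol y t2 t3) x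
              + 3 * q1sol x t2 t3 * deriv (fun y => q2sol y t2 t3) x
              - 6 * q1sol x t2 t3 ^ 2 * deriv (fun y => q1sol y t2 t3) x
              + (1 / 4) * iteratedDeriv 3 (fun y => q1sol y t2 t3) x)
        ∧ (deriv (fun s => q2sol x t2 s) t3
            = 6 * q1sol x t2 t3 * q2sol x t2 t3 * deriv (fun y => q1sol y t2 t3) x
              - 18 * q1sol x t2 t3 ^ 3 * deriv (fun y => q1sol y t2 t3) x
              + 6 * q1sol x t2 t3 ^ 2 * deriv (fun y => q2sol y t2 t3) x
              + (3 / 4) * q1sol x t2 t3 * iteratedDeriv 3 (fun y => q1sol y t2 t3) x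
              + 3 * q2sol x t2 t3 * deriv (fun y => q2sol y t2 t3) x
              + (1 / 4) * iteratedDeriv 3 (fun y => q2sol y t2 t3) x)) := by
  intro x t2 t3 h
  have hx : (denomInX t2 t3).eval x ≠ 0 := by rwa [eval_denomInX]
  have ht2 : (denomInT2 x t3).eval t2 ≠ 0 := by rwa [eval_denomInT2]
  have ht3 : (denomInT3 x t2).eval t3 ≠ 0 := by rwa [eval_denomInT3]
  simp only [← iteratedDeriv_one]
  rw [q1sol_x_eq_eval_div, q2sol_x_eq_eval_div, q1sol_t2_eq_eval_div, q2sol_t2_eq_eval_div,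
    q1sol_t3_eq_eval_div, q2sol_t3_eq_eval_div]
  -- `(𝕜 := ℝ)` lets `simp` match the instances of `iteratedDeriv`; the denominators are evaluated
  -- only afterwards, as the functions would otherwise lose the shape `p.eval / d.eval`.
  simp only [iteratedDeriv_eval_div (𝕜 := ℝ) _ _ _ hx, iteratedDeriv_eval_div (𝕜 := ℝ) _ _ _ ht2,
    iteratedDeriv_eval_div (𝕜 := ℝ) _ _ _ ht3]
  simp only [eval_denomInX, eval_denomInT2, eval_denomInT3]
  simp only [derivNumDivPow, denomInX, denomInT2, denomInT3, derivative_add, derivative_sub,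
    derivative_mul, derivative_C, derivative_X, derivative_X_pow, derivative_natCast,
    derivative_zero, derivative_one, eval_add, eval_sub, eval_mul, eval_pow, eval_C, eval_X,
    eval_natCast, eval_zero, eval_one, q1sol, q2sol]
  generalize hD : 3 * t3 + 2 * x ^ 3 + 6 * x * t2 = D at h ⊢
  obtain rfl : t3 = (D - 2 * x ^ 3 - 6 * x * t2) / 3 := by linear_combination hD / 3
  refine ⟨⟨?_, ?_⟩, ?_, ?_⟩ <;> field_simp <;> ring
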